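/- For every q-ary DMC W (q = 2^r, r ≥ 2): Z_max^{(r−1)}(W⁻) ≤ (q/2)·Z_max^{(r)}(W) + (q/2)·Z_max^{(r−1)}(W). -/

import Mathlib

open Finset

instance (r : ℕ) : NeZero (2 ^ r) := ⟨pow_ne_zero r two_ne_zero⟩

/-- The Bhattacharyya parameter `Z(W; x, x') = ∑_y √(W x y · W x' y)` of a pair of inputs. -/
noncomputable def bhat {q : ℕ} {Y : Type*} [Fintype Y] (W : ZMod q → Y → ℝ) (x x' : ZMod q) : ℝ :=
  ∑ y, Real.sqrt (W x y * W x' y)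

/-- `Z_v(W) = (1/q) ∑_x Z(W; x, x+v)`. -/
noncomputable def Zv {q : ℕ} [NeZero q] {Y : Type*} [Fintype Y] (W : ZMod q → Y → ℝ) (v : ZMod q) : ℝ :=
  (1 / (q : ℝ)) * ∑ x, bhat W x (x + v)

/-- `W` is a discrete memoryless channel: nonnegative entries and rows summing to one. -/
def IsDMC {q : ℕ} {Y : Type*} [Fintype Y] (W : ZMod q → Y → ℝ) : Prop :=
  (∀ x y, 0 ≤ W x y) ∧ ∀ x, ∑ y, W x y = 1

/-- The ordered weight `wt(v) = r - ν₂(v̄)` of `v : ZMod (2^r)`. -/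
def owt (r : ℕ) {q : ℕ} (v : ZMod q) : ℕ := r - padicValNat 2 v.val

/-- The `i`-th average Bhattacharyya distance `Z_i(W) = 2^{-(i-1)} ∑_{v ∈ X_i} Z_v(W)`. -/
noncomputable def Zi (r : ℕ) {Y : Type*} [Fintype Y] (W : ZMod (2 ^ r) → Y → ℝ) (i : ℕ) : ℝ :=
  (1 / 2 ^ (i - 1) : ℝ) *
    ∑ v ∈ univ.filter (fun v : ZMod (2 ^ r) => v ≠ 0 ∧ owt r v = i), Zv W v

/-- The symmetric capacity `I(W)` (with `0 log 0 = 0`). -/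
noncomputable def symCap {q : ℕ} [NeZero q] {Y : Type*} [Fintype Y] (W : ZMod q → Y → ℝ) : ℝ :=
  ∑ x, ∑ y, (1 / (q : ℝ)) * W x y *
    Real.logb 2 (W x y / ∑ x', (1 / (q : ℝ)) * W x' y)

/-- `Z_max^{(j)}(W) = max_{v ∈ X_j} Z_v(W)` (as a supremum over the finite nonempty class `X_j`). -/
noncomputable def Zmax (r : ℕ) {Y : Type*} [Fintype Y] (W : ZMod (2 ^ r) → Y → ℝ) (j : ℕ) : ℝ :=
  ⨆ v : {v : ZMod (2 ^ r) // v ≠ 0 ∧ owt r v = j}, Zv W v.1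

/-- The Arıkan minus transform `W⁻ u₁ (y₁,y₂) = (1/q) ∑_{u₂} W (u₁+u₂) y₁ · W u₂ y₂`. -/
noncomputable def Wminus {q : ℕ} [NeZero q] {Y : Type*} [Fintype Y] (W : ZMod q → Y → ℝ) :
    ZMod q → Y × Y → ℝ :=
  fun u₁ p => (1 / (q : ℝ)) * ∑ u₂, W (u₁ + u₂) p.1 * W u₂ p.2

/-- The Arıkan plus transform `W⁺ u₂ (y₁,y₂,u₁) = (1/q) W (u₁+u₂) y₁ · W u₂ y₂`. -/
noncomputable def Wplus {q : ℕ} [NeZero q] {Y : Type*} [Fintype Y] (W : ZMod q → Y → ℝ) :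
    ZMod q → Y × Y × ZMod q → ℝ :=
  fun u₂ p => (1 / (q : ℝ)) * W (p.2.2 + u₂) p.1 * W u₂ p.2.1

/-- The restricted channel `W^{[r-k]}` for the `r-k` least significant bits. -/
noncomputable def Wres (r k : ℕ) {Y : Type*} [Fintype Y] (W : ZMod (2 ^ r) → Y → ℝ) :
    ZMod (2 ^ (r - k)) → Y → ℝ :=
  fun u y => (1 / 2 ^ k : ℝ) *
    ∑ x ∈ univ.filter (fun x : ZMod (2 ^ r) => x.val % 2 ^ (r - k) = u.val), W x y

/-! The minus transform satisfies `Z_v(W⁻) ≤ ∑_w Z_{v+w}(W) Z_w(W)`, a convolution of the profile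
`w ↦ Z_w(W)` with itself. For `v` of weight `r - 1` (i.e. `v̄ ≡ 2 mod 4`) half of the `q` terms
have `w` odd, hence of weight `r`, and are at most `Z_w(W) ≤ Z_max^{(r)}(W)`; in each of the other
half either `w` or `v + w` is `≡ 2 mod 4`, so the term is at most `Z_max^{(r-1)}(W)`. -/

open Finset

lemma Real.sqrt_sum_le_sum_sqrt {ι : Type*} (s : Finset ι) {f : ι → ℝ} (hf : ∀ i ∈ s, 0 ≤ f i) :
    √(∑ i ∈ s, f i) ≤ ∑ i ∈ s, √(f i) := by
  rw [Real.sqrt_le_left (sum_nonneg fun i _ => Real.sqrt_nonneg _)]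
  calc ∑ i ∈ s, f i = ∑ i ∈ s, √(f i) ^ 2 :=
        sum_congr rfl fun i hi => (Real.sq_sqrt (hf i hi)).symm
    _ ≤ (∑ i ∈ s, √(f i)) ^ 2 := sum_sq_le_sq_sum_of_nonneg fun i _ => Real.sqrt_nonneg _

lemma Real.sqrt_sum_mul_sum_le {ι κ : Type*} (s : Finset ι) (t : Finset κ) {f : ι → ℝ}
    {g : κ → ℝ} (hf : ∀ i, 0 ≤ f i) (hg : ∀ j, 0 ≤ g j) :
    √((∑ i ∈ s, f i) * ∑ j ∈ t, g j) ≤ ∑ i ∈ s, ∑ j ∈ t, √(f i * g j) := by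
  rw [sum_mul_sum]
  refine (Real.sqrt_sum_le_sum_sqrt s fun i _ => sum_nonneg fun j _ =>
    mul_nonneg (hf i) (hg j)).trans (sum_le_sum fun i _ => ?_)
  exact Real.sqrt_sum_le_sum_sqrt t fun j _ => mul_nonneg (hf i) (hg j)

lemma Finset.sum_sum_eq_sum_sum_add {G M : Type*} [AddGroup G] [Fintype G] [AddCommMonoid M]
    (F : G → G → M) : ∑ a, ∑ b, F a b = ∑ w, ∑ a, F a (a + w) := by
  calc ∑ a, ∑ b, F a b = ∑ a, ∑ w, F a (a + w) :=
        sum_congr rfl fun a _ => (Equiv.sum_comp (Equiv.addLeft a) (F a)).symm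
    _ = ∑ w, ∑ a, F a (a + w) := sum_comm

section Bhattacharyya

variable {q : ℕ} {Y : Type*} [Fintype Y]

lemma bhat_nonneg (W : ZMod q → Y → ℝ) (x x' : ZMod q) : 0 ≤ bhat W x x' :=
  sum_nonneg fun _ _ => Real.sqrt_nonneg _

lemma bhat_le_one {W : ZMod q → Y → ℝ} (hW : IsDMC W) (x x' : ZMod q) : bhat W x x' ≤ 1 := by
  calc bhat W x x' = ∑ y, √(W x y) * √(W x' y) :=
        sum_congr rfl fun y _ => Real.sqrt_mul (hW.1 x y) _
    _ ≤ √(∑ y, W x y) * √(∑ y, W x' y) :=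
        Real.sum_sqrt_mul_sqrt_le _ (hW.1 x) (hW.1 x')
    _ = 1 := by rw [hW.2 x, hW.2 x', Real.sqrt_one, one_mul]

variable [NeZero q]

lemma Zv_nonneg (W : ZMod q → Y → ℝ) (v : ZMod q) : 0 ≤ Zv W v :=
  mul_nonneg (by positivity) (sum_nonneg fun x _ => bhat_nonneg W x (x + v))

lemma Zv_le_one {W : ZMod q → Y → ℝ} (hW : IsDMC W) (v : ZMod q) : Zv W v ≤ 1 := by
  have hq : (0 : ℝ) < q := Nat.cast_pos.mpr (NeZero.pos q)
  calc Zv W v ≤ 1 / (q : ℝ) * ∑ _x : ZMod q, (1 : ℝ) :=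
        mul_le_mul_of_nonneg_left (sum_le_sum fun x _ => bhat_le_one hW x (x + v)) (by positivity)
    _ = 1 := by simp [hq.ne']

lemma sum_bhat_add_add (W : ZMod q → Y → ℝ) (c d : ZMod q) :
    ∑ x, bhat W (x + c) (x + d) = q * Zv W (d - c) := by
  have hq : (q : ℝ) ≠ 0 := Nat.cast_ne_zero.mpr (NeZero.ne q)
  rw [Zv, ← mul_assoc, mul_one_div_cancel hq, one_mul,
    ← Equiv.sum_comp (Equiv.addRight c) (fun x => bhat W x (x + (d - c)))]
  simp only [Equiv.coe_addRight, add_add_sub_cancel]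

lemma bhat_Wminus_le {W : ZMod q → Y → ℝ} (hW : ∀ x y, 0 ≤ W x y) (u u' : ZMod q) :
    bhat (Wminus W) u u' ≤
      1 / (q : ℝ) * ∑ a, ∑ b, bhat W (u + a) (u' + b) * bhat W a b := by
  have hpoint : ∀ y : Y × Y, √(Wminus W u y * Wminus W u' y) ≤
      1 / (q : ℝ) * ∑ a, ∑ b, √(W (u + a) y.1 * W (u' + b) y.1) * √(W a y.2 * W b y.2) := by
    intro y
    rw [Wminus, Wminus, mul_mul_mul_comm, Real.sqrt_mul (by positivity),
      Real.sqrt_mul_self (by positivity)]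
    gcongr
    refine (Real.sqrt_sum_mul_sum_le _ _ (fun a => mul_nonneg (hW _ _) (hW _ _))
      fun b => mul_nonneg (hW _ _) (hW _ _)).trans_eq (sum_congr rfl fun a _ => sum_congr rfl
      fun b _ => ?_)
    rw [mul_mul_mul_comm, Real.sqrt_mul (mul_nonneg (hW _ _) (hW _ _))]
  calc bhat (Wminus W) u u' ≤ ∑ y : Y × Y, 1 / (q : ℝ) *
          ∑ a, ∑ b, √(W (u + a) y.1 * W (u' + b) y.1) * √(W a y.2 * W b y.2) :=
        sum_le_sum fun y _ => hpoint y
    _ = 1 / (q : ℝ) * ∑ a, ∑ b, ∑ y : Y × Y,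
          √(W (u + a) y.1 * W (u' + b) y.1) * √(W a y.2 * W b y.2) := by
        rw [← mul_sum, sum_comm]
        exact congrArg _ (sum_congr rfl fun a _ => sum_comm)
    _ = 1 / (q : ℝ) * ∑ a, ∑ b, bhat W (u + a) (u' + b) * bhat W a b := by
        simp only [bhat, sum_mul_sum, Fintype.sum_prod_type]

lemma Zv_Wminus_le {W : ZMod q → Y → ℝ} (hW : ∀ x y, 0 ≤ W x y) (v : ZMod q) :
    Zv (Wminus W) v ≤ ∑ w, Zv W (v + w) * Zv W w := by
  calc Zv (Wminus W) v
      ≤ 1 / (q : ℝ) * ∑ u, 1 / (q : ℝ) * ∑ a, ∑ b, bhat W (u + a) (u + v + b) * bhat W a b :=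
        mul_le_mul_of_nonneg_left (sum_le_sum fun u _ => bhat_Wminus_le hW u (u + v))
          (by positivity)
    _ = 1 / (q : ℝ) * (1 / q) * ∑ a, ∑ b, (∑ u, bhat W (u + a) (u + (v + b))) * bhat W a b := by
        simp only [← mul_sum, sum_mul, mul_assoc, add_assoc]
        rw [sum_comm]
        exact congrArg _ (congrArg _ (sum_congr rfl fun a _ => sum_comm))
    _ = 1 / (q : ℝ) * ∑ w, Zv W (v + w) * ∑ a, bhat W a (a + w) := by
        have hcancel : ∀ a w : ZMod q, v + (a + w) - a = v + w := fun a w => by abel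
        simp only [sum_bhat_add_add]
        rw [sum_sum_eq_sum_sum_add]
        simp only [hcancel, mul_assoc, ← mul_sum]
        field_simp
    _ = ∑ w, Zv W (v + w) * Zv W w := by
        rw [mul_sum]
        exact sum_congr rfl fun w _ => mul_left_comm _ _ _

end Bhattacharyya

lemma ZMod.val_add_one_mod_two {n : ℕ} [NeZero n] (hn : 2 ∣ n) (w : ZMod n) :
    (w + 1).val % 2 = (w.val + 1) % 2 := by
  rw [ZMod.val_add, Nat.mod_mod_of_dvd _ hn, Nat.add_mod, ZMod.val_one_eq_one_mod,
    Nat.mod_mod_of_dvd _ hn, ← Nat.add_mod]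

/-- Pairing `w` with `w + 1`, which has the other parity. -/
lemma ZMod.sum_le_of_odd_le_of_even_le {n : ℕ} [NeZero n] (hn : 2 ∣ n) {f : ZMod n → ℝ}
    {A B : ℝ} (hodd : ∀ w : ZMod n, w.val % 2 = 1 → f w ≤ A)
    (heven : ∀ w : ZMod n, w.val % 2 = 0 → f w ≤ B) :
    ∑ w, f w ≤ n / 2 * A + n / 2 * B := by
  let g : ZMod n → ℝ := fun w => if w.val % 2 = 1 then A else B
  have hfg : ∀ w, f w ≤ g w := fun w => by
    by_cases hw : w.val % 2 = 1
    · simp only [g, if_pos hw, hodd w hw]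
    · simp only [g, if_neg hw, heven w (by omega)]
  have hpair : ∀ w, g w + g (w + 1) = A + B := fun w => by
    have := ZMod.val_add_one_mod_two hn w
    by_cases hw : w.val % 2 = 1
    · simp only [g, if_pos hw, if_neg (show ¬ (w + 1).val % 2 = 1 by omega)]
    · simp only [g, if_neg hw, if_pos (show (w + 1).val % 2 = 1 by omega), add_comm]
  have hsum : 2 * ∑ w, g w = n * (A + B) := by
    calc 2 * ∑ w, g w = ∑ w, g w + ∑ w, g (w + 1) := by
          rw [two_mul]
          exact congrArg _ (Equiv.sum_comp (Equiv.addRight 1) g).symm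
      _ = n * (A + B) := by
          simp only [← sum_add_distrib, hpair, sum_const, card_univ, ZMod.card, nsmul_eq_mul]
  calc ∑ w, f w ≤ ∑ w, g w := sum_le_sum fun w _ => hfg w
    _ = n / 2 * A + n / 2 * B := by linarith

lemma padicValNat_two_eq_one_iff {n : ℕ} (hn : n ≠ 0) : padicValNat 2 n = 1 ↔ n % 4 = 2 := by
  have h2 := padicValNat_dvd_iff_le (p := 2) (n := 1) hn
  have h4 := padicValNat_dvd_iff_le (p := 2) (n := 2) hn
  norm_num at h2 h4
  omega

lemma owt_eq_of_odd (r : ℕ) {q : ℕ} {v : ZMod q} (hv : v.val % 2 = 1) : v ≠ 0 ∧ owt r v = r := by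
  refine ⟨fun h => by simp [h] at hv, ?_⟩
  rw [owt, padicValNat.eq_zero_of_not_dvd (by omega), Nat.sub_zero]

lemma owt_eq_sub_one_iff {r q : ℕ} (hr : 2 ≤ r) (v : ZMod q) :
    v ≠ 0 ∧ owt r v = r - 1 ↔ v.val % 4 = 2 := by
  rw [owt, ← ZMod.val_ne_zero]
  constructor
  · rintro ⟨hv, hwt⟩
    exact (padicValNat_two_eq_one_iff hv).1 (by omega)
  · intro hv
    have hv0 : v.val ≠ 0 := by omega
    exact ⟨hv0, by rw [(padicValNat_two_eq_one_iff hv0).2 hv]⟩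

lemma Zv_le_Zmax (r : ℕ) {Y : Type*} [Fintype Y] (W : ZMod (2 ^ r) → Y → ℝ) {v : ZMod (2 ^ r)}
    {j : ℕ} (hv : v ≠ 0 ∧ owt r v = j) : Zv W v ≤ Zmax r W j :=
  le_ciSup (f := fun v : {v : ZMod (2 ^ r) // v ≠ 0 ∧ owt r v = j} => Zv W v.1)
    (Set.finite_range _).bddAbove ⟨v, hv⟩

lemma Zmax_nonneg (r : ℕ) {Y : Type*} [Fintype Y] (W : ZMod (2 ^ r) → Y → ℝ) (j : ℕ) :
    0 ≤ Zmax r W j :=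
  Real.iSup_nonneg fun v => Zv_nonneg W v.1

lemma Zv_add_mul_Zv_le_Zmax_sub_one {r : ℕ} (hr : 2 ≤ r) {Y : Type*} [Fintype Y]
    {W : ZMod (2 ^ r) → Y → ℝ} (hW : IsDMC W) {v w : ZMod (2 ^ r)} (hv : v.val % 4 = 2)
    (hw : w.val % 2 = 0) : Zv W (v + w) * Zv W w ≤ Zmax r W (r - 1) := by
  rcases (by omega : w.val % 4 = 2 ∨ w.val % 4 = 0) with hw4 | hw4
  · calc Zv W (v + w) * Zv W w ≤ Zv W w := mul_le_of_le_one_left (Zv_nonneg W w) (Zv_le_one hW _)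
      _ ≤ Zmax r W (r - 1) := Zv_le_Zmax r W ((owt_eq_sub_one_iff hr w).2 hw4)
  · have h4 : 4 ∣ 2 ^ r := pow_dvd_pow 2 hr
    have hvw : (v + w).val % 4 = 2 := by
      rw [ZMod.val_add, Nat.mod_mod_of_dvd _ h4]
      omega
    calc Zv W (v + w) * Zv W w ≤ Zv W (v + w) :=
          mul_le_of_le_one_right (Zv_nonneg W _) (Zv_le_one hW w)
      _ ≤ Zmax r W (r - 1) := Zv_le_Zmax r W ((owt_eq_sub_one_iff hr _).2 hvw)

theorem Zmax_minus_second_general (r : ℕ) (hr : 2 ≤ r) {Y : Type*} [Fintype Y]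
    (W : ZMod (2 ^ r) → Y → ℝ) (hW : IsDMC W) :
    Zmax r (Wminus W) (r - 1) ≤
      ((2 ^ r : ℝ) / 2) * Zmax r W r + ((2 ^ r : ℝ) / 2) * Zmax r W (r - 1) := by
  have hbound_nonneg :
      0 ≤ ((2 ^ r : ℝ) / 2) * Zmax r W r + ((2 ^ r : ℝ) / 2) * Zmax r W (r - 1) :=
    add_nonneg (mul_nonneg (by positivity) (Zmax_nonneg r W r))
      (mul_nonneg (by positivity) (Zmax_nonneg r W (r - 1)))
  refine Real.iSup_le (fun ⟨v, hv⟩ => ?_) hbound_nonneg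
  have hv4 : v.val % 4 = 2 := (owt_eq_sub_one_iff hr v).1 hv
  calc Zv (Wminus W) v ≤ ∑ w, Zv W (v + w) * Zv W w := Zv_Wminus_le hW.1 v
    _ ≤ ((2 ^ r : ℕ) : ℝ) / 2 * Zmax r W r + ((2 ^ r : ℕ) : ℝ) / 2 * Zmax r W (r - 1) :=
        ZMod.sum_le_of_odd_le_of_even_le (dvd_pow_self 2 (by omega))
          (fun w hw => (mul_le_of_le_one_left (Zv_nonneg W w) (Zv_le_one hW _)).trans
            (Zv_le_Zmax r W (owt_eq_of_odd r hw)))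
          (fun w hw => Zv_add_mul_Zv_le_Zmax_sub_one hr hW hv4 hw)
    _ = ((2 ^ r : ℝ) / 2) * Zmax r W r + ((2 ^ r : ℝ) / 2) * Zmax r W (r - 1) := by push_cast; rfl

/-- `Z_max^{(r-1)}(W⁻) ≤ (q/2) Z_max^{(r)}(W) + (q/2) Z_max^{(r-1)}(W)`. -/
theorem Zmax_minus_second (r : ℕ) (hr : 2 ≤ r) {Y : Type*} [Fintype Y] [Nonempty Y]
    (W : ZMod (2 ^ r) → Y → ℝ) (hW : IsDMC W) :
    Zmax r (Wminus W) (r - 1) ≤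
      ((2 ^ r : ℝ) / 2) * Zmax r W r + ((2 ^ r : ℝ) / 2) * Zmax r W (r - 1) :=
  Zmax_minus_second_general r hr W hW
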